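/- arXiv:1006.1011 — 3 statements merged into one kernel-verified Lean document; each statement's English description precedes it below -/
import Mathlib

section
/- Let n ≥ 1 and b ∈ ℂⁿ. Then the following are equivalent: (i) for every x ∈ ℂⁿ with |xᵢ| = 1/√n for all i, one has |⟨x,b⟩| = ‖b‖/√n; (ii) there exists an index i such that bⱼ = 0 for all j ≠ i. In other words, the double 1/√n-complement of the set of rays of the standard orthonormal basis of ℂⁿ consists exactly of the standard basis rays. -/
/-- For `n ≥ 1` and `b ∈ ℂⁿ`, the following are equivalent:
(i) for every vector `x` unbiased with respect to the standard basis
(`‖x i‖ = 1/√n` for all `i`) one has `‖⟨x,b⟩‖ = ‖b‖/√n`;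
(ii) `b` is supported on a single coordinate, i.e. there is an index `i`
such that `b j = 0` for all `j ≠ i`.  In other words, the double
`1/√n`-complement of the set of standard basis rays of `ℂⁿ` consists exactly
of the standard basis rays. -/
theorem double_complement_of_standard_basis (n : ℕ) (hn : 1 ≤ n)
    (b : EuclideanSpace ℂ (Fin n)) :
    (∀ x : EuclideanSpace ℂ (Fin n), (∀ i, ‖x i‖ = 1 / Real.sqrt n) →
        ‖(inner ℂ x b : ℂ)‖ = ‖b‖ / Real.sqrt n) ↔
    (∃ i : Fin n, ∀ j : Fin n, j ≠ i → b j = 0) := by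
  have hn0 : (0:ℝ) < n := by exact_mod_cast Nat.lt_of_lt_of_le Nat.zero_lt_one hn
  have hs : (0:ℝ) < Real.sqrt n := Real.sqrt_pos.2 hn0
  constructor
  · intro h
    by_cases hb : b = 0
    · exact ⟨⟨0, hn⟩, fun j _ => by simp [hb]⟩
    · set x : EuclideanSpace ℂ (Fin n) := WithLp.toLp 2 fun i =>
        if b i = 0 then ((1 / Real.sqrt n : ℝ) : ℂ)
        else b i / ((‖b i‖ : ℂ) * ((Real.sqrt n : ℝ) : ℂ)) with hxdef
      have hxnorm : ∀ i, ‖x i‖ = 1 / Real.sqrt n := by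
        intro i
        by_cases hbi : b i = 0
        · simp [hxdef, hbi, Complex.norm_real, abs_of_nonneg, hs.le]
        · have hbn : ‖b i‖ ≠ 0 := norm_ne_zero_iff.2 hbi
          simp only [hxdef, PiLp.toLp_apply, hbi, if_neg, ite_false, norm_div, norm_mul, Complex.norm_real,
            Real.norm_eq_abs, abs_of_nonneg (norm_nonneg (b i)), abs_of_nonneg hs.le]
          rw [div_eq_div_iff (mul_ne_zero hbn hs.ne') hs.ne']
          ring
      have hinner : (inner ℂ x b : ℂ) = ((∑ j, ‖b j‖) / Real.sqrt n : ℝ) := by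
        rw [PiLp.inner_apply]
        push_cast
        rw [Finset.sum_div]
        refine Finset.sum_congr rfl fun j _ => ?_
        by_cases hbj : b j = 0
        · simp [hxdef, hbj]
        · have hbn : (‖b j‖ : ℂ) ≠ 0 := Complex.ofReal_ne_zero.2 (norm_ne_zero_iff.2 hbj)
          have hsn : ((Real.sqrt n : ℝ) : ℂ) ≠ 0 := Complex.ofReal_ne_zero.2 hs.ne'
          simp only [hxdef, PiLp.toLp_apply, hbj, if_neg, ite_false, RCLike.inner_apply, map_div₀, map_mul,
            Complex.conj_ofReal]
          rw [← mul_div_assoc, Complex.mul_conj,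
            Complex.normSq_eq_norm_sq]
          rw [div_eq_div_iff (mul_ne_zero hbn hsn) hsn]
          push_cast
          ring
      have hsum : ∑ j, ‖b j‖ = ‖b‖ := by
        have := h x hxnorm
        rw [hinner] at this
        rw [Complex.norm_real, Real.norm_eq_abs,
          abs_of_nonneg (by positivity)] at this
        rw [div_eq_div_iff hs.ne' hs.ne'] at this
        exact mul_right_cancel₀ hs.ne' this
      -- now ℓ¹ = ℓ² forces single support
      have hnormsq : ‖b‖ ^ 2 = ∑ j, ‖b j‖ ^ 2 := by
        rw [EuclideanSpace.norm_eq, Real.sq_sqrt (by positivity)]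
      have hzero : ∀ j : Fin n, ‖b j‖ * (‖b‖ - ‖b j‖) = 0 := by
        have hsum2 : ∑ j, ‖b j‖ * (‖b‖ - ‖b j‖) = 0 := by
          have : ∑ j, ‖b j‖ * (‖b‖ - ‖b j‖) = (∑ j, ‖b j‖) * ‖b‖ - ∑ j, ‖b j‖ ^ 2 := by
            rw [Finset.sum_mul, ← Finset.sum_sub_distrib]
            exact Finset.sum_congr rfl fun j _ => by ring
          rw [this, hsum, ← hnormsq]
          ring
        intro j
        have hnn : ∀ j : Fin n, j ∈ Finset.univ → 0 ≤ ‖b j‖ * (‖b‖ - ‖b j‖) := by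
          intro j _
          apply mul_nonneg (norm_nonneg _)
          rw [sub_nonneg, ← hsum]
          exact Finset.single_le_sum (fun k _ => norm_nonneg _) (Finset.mem_univ j)
        exact (Finset.sum_eq_zero_iff_of_nonneg hnn).1 hsum2 j (Finset.mem_univ j)
      obtain ⟨i, hi⟩ : ∃ i : Fin n, b i ≠ 0 := by
        by_contra hc
        push_neg at hc
        exact hb (by ext k; exact hc k)
      refine ⟨i, fun j hj => ?_⟩
      have hbi : ‖b i‖ ≠ 0 := norm_ne_zero_iff.2 hi
      have hbeq : ‖b‖ = ‖b i‖ := by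
        have := hzero i
        rcases mul_eq_zero.1 this with h1 | h2
        · exact absurd h1 hbi
        · linarith [sub_eq_zero.1 h2]
      have hle : ‖b j‖ + ‖b i‖ ≤ ∑ k, ‖b k‖ := by
        have := Finset.sum_le_sum_of_subset_of_nonneg
          (Finset.insert_subset_iff.2 ⟨Finset.mem_univ j, Finset.singleton_subset_iff.2 (Finset.mem_univ i)⟩)
          (fun k _ _ => norm_nonneg (b k))
        rwa [Finset.sum_insert (by simpa using hj), Finset.sum_singleton] at this
      have : ‖b j‖ ≤ 0 := by
        rw [hsum, hbeq] at hle
        linarith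
      exact norm_eq_zero.1 (le_antisymm this (norm_nonneg _))
  · rintro ⟨i, hi⟩
    intro x hx
    have hnorm : ‖b‖ = ‖b i‖ := by
      rw [EuclideanSpace.norm_eq]
      rw [Finset.sum_eq_single i (fun j _ hj => by simp [hi j hj]) (by simp)]
      exact Real.sqrt_sq (norm_nonneg _)
    have : (inner ℂ x b : ℂ) = (starRingEnd ℂ) (x i) * b i := by
      rw [PiLp.inner_apply]
      rw [Finset.sum_eq_single i (fun j _ hj => by simp [hi j hj]) (by simp)]
      rw [RCLike.inner_apply, mul_comm]
    rw [this, norm_mul, RCLike.norm_conj, hx i, hnorm]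
    ring
end

section
/- Every partition is a testable: let X be a nonempty set and β a partition of X (a family of pairwise disjoint nonempty subsets whose union is X). Then (i) β^⊥ is exactly the set of transversals of β (subsets u ⊆ X with u ∩ b a singleton for every b ∈ β), (ii) β^⊥ is a test space over X, and (iii) β^{⊥⊥} = β; hence β is a testable over X. -/
/-- The complement `α^⊥` of a family `α` of subsets of `X`: all subsets `u`
that intersect every test `a ∈ α` in exactly one element, and are minimal
with this property. -/
def tcomp {X : Type*} (α : Set (Set X)) : Set (Set X) :=
  { u | (∀ a ∈ α, ∃! x, x ∈ u ∩ a) ∧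
        ∀ u' ⊆ u, (∀ a ∈ α, ∃! x, x ∈ u' ∩ a) → u' = u }

/-- A test space over `X`: a covered and irredundant family of subsets. -/
def IsTestSpace {X : Type*} (α : Set (Set X)) : Prop :=
  ⋃₀ α = Set.univ ∧ ∀ a ∈ α, ∀ b ∈ α, a ⊆ b → a = b

/-- A testable over `X`: both `α` and `α^⊥` are test spaces and `α^{⊥⊥} = α`. -/
def IsTestableFam {X : Type*} (α : Set (Set X)) : Prop :=
  IsTestSpace α ∧ IsTestSpace (tcomp α) ∧ tcomp (tcomp α) = α

/-- A partition of `X`: a family of pairwise disjoint nonempty subsets whose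
union is `X`. -/
def IsPartition {X : Type*} (β : Set (Set X)) : Prop :=
  (∀ b ∈ β, b.Nonempty) ∧
  (∀ b ∈ β, ∀ b' ∈ β, b ≠ b' → b ∩ b' = ∅) ∧
  ⋃₀ β = Set.univ

lemma pick_transversal {X : Type*} {β : Set (Set X)} (hβ : IsPartition β)
    (f : Set X → X) (hf : ∀ b ∈ β, f b ∈ b) :
    (∀ b ∈ β, ∃! y, y ∈ f '' β ∩ b) ∧ ∀ b ∈ β, f '' β ∩ b = {f b} := by
  obtain ⟨hne, hdisj, hcov⟩ := hβ
  have key : ∀ b ∈ β, f '' β ∩ b = {f b} := by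
    intro b hb
    apply Set.eq_singleton_iff_unique_mem.mpr
    refine ⟨⟨⟨b, hb, rfl⟩, hf b hb⟩, ?_⟩
    rintro y ⟨⟨b', hb', rfl⟩, hyb⟩
    by_cases h : b' = b
    · rw [h]
    · exact absurd (Set.mem_inter (hf b' hb') hyb) (by rw [hdisj b' hb' b hb h]; simp)
  refine ⟨fun b hb => ?_, key⟩
  rw [key b hb]
  exact ⟨f b, rfl, fun y hy => hy⟩

open Classical in
noncomputable def pick2 {X : Type*} [Nonempty X] (x y : X) : Set X → X :=
  fun b => if y ∈ b then y else if x ∈ b then x else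
    if h : b.Nonempty then h.some else Classical.arbitrary X

lemma pick2_mem {X : Type*} [Nonempty X] {β : Set (Set X)} (hβ : IsPartition β)
    (x y : X) : ∀ b ∈ β, pick2 x y b ∈ b := by
  intro b hb
  unfold pick2
  classical
  split_ifs with h1 h2 h3
  · exact h1
  · exact h2
  · exact h3.some_mem
  · exact absurd (hβ.1 b hb) h3

/-- Every partition is a testable: for a partition `β` of a nonempty set `X`,
(i) `β^⊥` is exactly the set of transversals of `β`, (ii) `β^⊥` is a test
space, and (iii) `β^{⊥⊥} = β`; hence `β` is a testable over `X`. -/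
theorem partition_is_testable {X : Type*} [Nonempty X] (β : Set (Set X))
    (hβ : IsPartition β) :
    tcomp β = { u : Set X | ∀ b ∈ β, ∃! x, x ∈ u ∩ b } ∧
    IsTestSpace (tcomp β) ∧
    tcomp (tcomp β) = β ∧
    IsTestableFam β := by
  classical
  obtain ⟨hne, hdisj, hcov⟩ := hβ
  have hβ' : IsPartition β := ⟨hne, hdisj, hcov⟩
  have hblock : ∀ x : X, ∃ b ∈ β, x ∈ b := by
    intro x
    have : x ∈ ⋃₀ β := by rw [hcov]; trivial
    exact this
  -- (i) tcomp β = transversals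
  have hi : tcomp β = { u : Set X | ∀ b ∈ β, ∃! x, x ∈ u ∩ b } := by
    ext u
    constructor
    · exact fun h => h.1
    · intro hu
      refine ⟨hu, fun u' hsub hu' => ?_⟩
      apply Set.Subset.antisymm hsub
      intro z hz
      obtain ⟨b, hb, hzb⟩ := hblock z
      obtain ⟨w, hw, hwu⟩ := hu' b hb
      obtain ⟨v, hv, hvu⟩ := hu b hb
      have hwv : w = v := hvu w ⟨hsub hw.1, hw.2⟩
      have hzv : z = v := hvu z ⟨hz, hzb⟩
      rw [hzv, ← hwv]; exact hw.1
  -- transversal existence: for any x, a transversal containing x (and possibly y)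
  have htr : ∀ x y : X, pick2 x y '' β ∈ tcomp β := by
    intro x y
    rw [hi]
    exact (pick_transversal hβ' _ (pick2_mem hβ' x y)).1
  have hmem : ∀ x y : X, ∀ b ∈ β, y ∈ b → y ∈ pick2 x y '' β := by
    intro x y b hb hyb
    refine ⟨b, hb, ?_⟩
    unfold pick2; rw [if_pos hyb]
  have hmemx : ∀ x y : X, ∀ b ∈ β, x ∈ b → y ∉ b → x ∈ pick2 x y '' β := by
    intro x y b hb hxb hyb
    refine ⟨b, hb, ?_⟩
    unfold pick2; rw [if_neg hyb, if_pos hxb]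
  -- (ii) test space
  have hii : IsTestSpace (tcomp β) := by
    constructor
    · apply Set.eq_univ_of_forall
      intro x
      obtain ⟨b, hb, hxb⟩ := hblock x
      exact ⟨pick2 x x '' β, htr x x, hmem x x b hb hxb⟩
    · intro u hu v hv hsub
      rw [hi] at hu hv
      apply Set.Subset.antisymm hsub
      intro z hz
      obtain ⟨b, hb, hzb⟩ := hblock z
      obtain ⟨w, hw, hwu⟩ := hu b hb
      obtain ⟨w', hw', hwv⟩ := hv b hb
      have h1 : w = w' := hwv w ⟨hsub hw.1, hw.2⟩
      have h2 : z = w' := hwv z ⟨hz, hzb⟩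
      rw [h2, ← h1]; exact hw.1
  -- (iii) tcomp (tcomp β) = β
  have hiii : tcomp (tcomp β) = β := by
    ext w
    constructor
    · rintro ⟨hw, _⟩
      -- w meets every transversal in exactly one point
      have hwne : w.Nonempty := by
        obtain ⟨z, hz, _⟩ := hw _ (htr (Classical.arbitrary X) (Classical.arbitrary X))
        exact ⟨z, hz.1⟩
      obtain ⟨x, hxw⟩ := hwne
      obtain ⟨b, hb, hxb⟩ := hblock x
      -- w ⊆ b
      have hwb : w ⊆ b := by
        intro y hyw
        obtain ⟨b', hb', hyb'⟩ := hblock y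
        by_cases hbb : b' = b
        · rw [← hbb]; exact hyb'
        · exfalso
          -- transversal containing both x and y
          have hu := htr x y
          obtain ⟨z, _, hz⟩ := hw _ hu
          have hxu : x ∈ pick2 x y '' β := by
            apply hmemx x y b hb hxb
            intro hyb
            exact absurd (Set.mem_inter hyb' hyb) (by rw [hdisj b' hb' b hb hbb]; simp)
          have hyu : y ∈ pick2 x y '' β := hmem x y b' hb' hyb'
          have e1 : x = z := hz x ⟨hxw, hxu⟩
          have e2 : y = z := hz y ⟨hyw, hyu⟩
          apply hbb
          have : y = x := by rw [e1, e2]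
          rw [← this] at hxb
          by_contra h
          exact absurd (Set.mem_inter hyb' hxb) (by rw [hdisj b' hb' b hb hbb]; simp)
      -- b ⊆ w
      have hbw : b ⊆ w := by
        intro z hzb
        by_contra hzw
        -- transversal with u ∩ b = {z}
        have hu := htr z z
        obtain ⟨v, hv, _⟩ := hw _ hu
        have hvb : v ∈ pick2 z z '' β ∩ b := by
          have := (pick_transversal hβ' _ (pick2_mem hβ' z z)).2 b hb
          have hvw := hv.1
          have hvbb : v ∈ b := hwb hvw
          exact ⟨hv.2, hvbb⟩
        have : pick2 z z '' β ∩ b = {pick2 z z b} :=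
          (pick_transversal hβ' _ (pick2_mem hβ' z z)).2 b hb
        have hpz : pick2 z z b = z := by unfold pick2; rw [if_pos hzb]
        have : v = z := by
          have := this ▸ hvb
          rwa [hpz] at this
        exact hzw (this ▸ hv.1)
      exact (Set.Subset.antisymm hwb hbw) ▸ hb
    · intro hb
      refine ⟨fun u hu => ?_, fun w' hsub hw' => ?_⟩
      · rw [hi] at hu
        obtain ⟨z, hz, huniq⟩ := hu w hb
        exact ⟨z, ⟨hz.2, hz.1⟩, fun y hy => huniq y ⟨hy.2, hy.1⟩⟩
      · apply Set.Subset.antisymm hsub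
        intro z hzw
        -- transversal through z
        have hu := htr z z
        obtain ⟨v, hv, hvuniq⟩ := hw' _ hu
        have hsing := (pick_transversal hβ' _ (pick2_mem hβ' z z)).2 w hb
        have hpz : pick2 z z w = z := by unfold pick2; rw [if_pos hzw]
        have hvw : v ∈ pick2 z z '' β ∩ w := ⟨hv.2, hsub hv.1⟩
        have : v = z := by
          have := hsing ▸ hvw
          rwa [hpz] at this
        exact this ▸ hv.1
  -- test space β
  have hts : IsTestSpace β := by
    refine ⟨hcov, fun a ha b hb hsub => ?_⟩
    by_contra h
    obtain ⟨x, hx⟩ := hne a ha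
    exact absurd (Set.mem_inter hx (hsub hx)) (by rw [hdisj a ha b hb h]; simp)
  exact ⟨hi, hii, hiii, hts, hii, hiii⟩
end

section
/- A basis in Rel has a complementary basis exactly when its blocks have equal size: let X be a finite nonempty set and β a partition of X. There exists a partition γ of X such that b ∩ c is a singleton for every b ∈ β and c ∈ γ, if and only if all blocks of β have the same cardinality (equivalently, |X| = |b|·|β| for every b ∈ β). -/
lemma IsPartition.existsUnique_block {X : Type*} {β : Set (Set X)}
    (hβ : IsPartition β) (x : X) : ∃! b, b ∈ β ∧ x ∈ b := by
  obtain ⟨-, hdisj, huniv⟩ := hβ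
  have hx : x ∈ ⋃₀ β := huniv ▸ Set.mem_univ x
  obtain ⟨b, hb, hxb⟩ := hx
  refine ⟨b, ⟨hb, hxb⟩, ?_⟩
  rintro b' ⟨hb', hxb'⟩
  by_contra h
  have h0 := hdisj b' hb' b hb h
  exact absurd (Set.mem_inter hxb' hxb) (by simp [h0])

/-- From a complementary partition: each block of β is in bijection with γ,
and X ≃ β × γ. -/
lemma complementary_cards {X : Type*} [Finite X] {β γ : Set (Set X)}
    (hβ : IsPartition β) (hγ : IsPartition γ)
    (hcomp : ∀ b ∈ β, ∀ c ∈ γ, ∃! x, x ∈ b ∩ c) :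
    (∀ b ∈ β, b.ncard = γ.ncard) ∧ Nat.card X = β.ncard * γ.ncard := by
  choose blk blkspec blkuniq using fun x => hβ.existsUnique_block x
  choose cblk cblkspec cblkuniq using fun x => hγ.existsUnique_block x
  have blkmem := fun x => (blkspec x).1
  have blkin := fun x => (blkspec x).2
  have cblkmem := fun x => (cblkspec x).1
  have cblkin := fun x => (cblkspec x).2
  have ha : ∀ b ∈ β, b.ncard = γ.ncard := by
    intro b hb
    have hbij : Function.Bijective (fun x : b => (⟨cblk x, cblkmem x⟩ : γ)) := by
      constructor
      · rintro ⟨x, hx⟩ ⟨y, hy⟩ hxy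
        simp only [Subtype.mk.injEq] at hxy
        have hcx : x ∈ b ∩ cblk y := ⟨hx, hxy ▸ cblkin x⟩
        have hcy : y ∈ b ∩ cblk y := ⟨hy, cblkin y⟩
        exact Subtype.ext ((hcomp b hb (cblk y) (cblkmem y)).unique hcx hcy)
      · rintro ⟨c, hc⟩
        obtain ⟨x, ⟨hxb, hxc⟩, -⟩ := hcomp b hb c hc
        exact ⟨⟨x, hxb⟩, Subtype.ext (cblkuniq x c ⟨hc, hxc⟩).symm⟩
    rw [← Nat.card_coe_set_eq, ← Nat.card_coe_set_eq]
    exact Nat.card_eq_of_bijective _ hbij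
  refine ⟨ha, ?_⟩
  have hbij : Function.Bijective
      (fun x : X => ((⟨blk x, blkmem x⟩ : β), (⟨cblk x, cblkmem x⟩ : γ))) := by
    constructor
    · intro x y hxy
      simp only [Prod.mk.injEq, Subtype.mk.injEq] at hxy
      obtain ⟨h1, h2⟩ := hxy
      have hx : x ∈ blk y ∩ cblk y := ⟨h1 ▸ blkin x, h2 ▸ cblkin x⟩
      have hy : y ∈ blk y ∩ cblk y := ⟨blkin y, cblkin y⟩
      exact (hcomp (blk y) (blkmem y) (cblk y) (cblkmem y)).unique hx hy
    · rintro ⟨⟨b, hb⟩, ⟨c, hc⟩⟩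
      obtain ⟨x, ⟨hxb, hxc⟩, -⟩ := hcomp b hb c hc
      exact ⟨x, by
        simp only [Prod.mk.injEq, Subtype.mk.injEq]
        exact ⟨(blkuniq x b ⟨hb, hxb⟩).symm, (cblkuniq x c ⟨hc, hxc⟩).symm⟩⟩
  rw [← Nat.card_coe_set_eq, ← Nat.card_coe_set_eq, ← Nat.card_prod]
  exact Nat.card_eq_of_bijective _ hbij

/-- Construction of a complementary partition from equal block sizes. -/
lemma exists_complementary {X : Type*} [Finite X] [Nonempty X]
    {β : Set (Set X)} (hβ : IsPartition β)
    (heq : ∀ b ∈ β, ∀ b' ∈ β, b.ncard = b'.ncard) :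
    ∃ γ : Set (Set X), IsPartition γ ∧ ∀ b ∈ β, ∀ c ∈ γ, ∃! x, x ∈ b ∩ c := by
  choose blk blkspec blkuniq using fun x => hβ.existsUnique_block x
  have blkmem := fun x => (blkspec x).1
  have blkin := fun x => (blkspec x).2
  obtain ⟨b₀, hb₀⟩ : β.Nonempty := by
    obtain ⟨x⟩ := ‹Nonempty X›
    exact ⟨blk x, blkmem x⟩
  set n := b₀.ncard with hn
  have hcard : ∀ b ∈ β, Nat.card b = n := by
    intro b hb
    rw [Nat.card_coe_set_eq]
    exact heq b hb b₀ hb₀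
  have hE : ∀ b, b ∈ β → Nonempty (b ≃ Fin n) := fun b hb =>
    ⟨Finite.equivFinOfCardEq (hcard b hb)⟩
  let E : ∀ b, b ∈ β → (b ≃ Fin n) := fun b hb => (hE b hb).some
  let g : X → Fin n := fun x => E (blk x) (blkmem x) ⟨x, blkin x⟩
  have hg : ∀ b (hb : b ∈ β) (x : X) (hx : x ∈ b), g x = E b hb ⟨x, hx⟩ := by
    intro b hb x hx
    have h : blk x = b := (blkuniq x b ⟨hb, hx⟩).symm
    subst h
    rfl
  refine ⟨Set.range (fun i : Fin n => g ⁻¹' {i}), ⟨?_, ?_, ?_⟩, ?_⟩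
  · rintro c ⟨i, rfl⟩
    refine ⟨((E b₀ hb₀).symm i).1, ?_⟩
    simp only [Set.mem_preimage, Set.mem_singleton_iff]
    rw [hg b₀ hb₀ _ ((E b₀ hb₀).symm i).2]
    simp
  · rintro c ⟨i, rfl⟩ c' ⟨j, rfl⟩ hne
    have hij : i ≠ j := fun h => hne (by rw [h])
    ext x
    simp only [Set.mem_inter_iff, Set.mem_preimage, Set.mem_singleton_iff,
      Set.mem_empty_iff_false, iff_false, not_and]
    intro h1 h2
    exact hij (h1 ▸ h2 ▸ rfl)
  · ext x
    simp only [Set.mem_sUnion, Set.mem_range, Set.mem_univ, iff_true]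
    exact ⟨g ⁻¹' {g x}, ⟨g x, rfl⟩, rfl⟩
  · rintro b hb c ⟨i, rfl⟩
    refine ⟨((E b hb).symm i).1, ⟨((E b hb).symm i).2, ?_⟩, ?_⟩
    · simp only [Set.mem_preimage, Set.mem_singleton_iff]
      rw [hg b hb _ ((E b hb).symm i).2]
      simp
    · rintro y ⟨hyb, hyi⟩
      simp only [Set.mem_preimage, Set.mem_singleton_iff] at hyi
      rw [hg b hb y hyb] at hyi
      have : (⟨y, hyb⟩ : b) = (E b hb).symm i := by
        rw [Equiv.eq_symm_apply]; exact hyi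
      exact congrArg Subtype.val this

/-- A basis in `Rel` has a complementary basis exactly when its blocks have
equal size: for a partition `β` of a finite nonempty set `X`, there is a
partition `γ` of `X` with `b ∩ c` a singleton for all `b ∈ β`, `c ∈ γ`, if and
only if all blocks of `β` have the same cardinality (equivalently,
`|X| = |b|·|β|` for every `b ∈ β`). -/
theorem complementary_partition_iff_equal_blocks {X : Type*} [Finite X]
    [Nonempty X] (β : Set (Set X)) (hβ : IsPartition β) :
    ((∃ γ : Set (Set X), IsPartition γ ∧
        ∀ b ∈ β, ∀ c ∈ γ, ∃! x, x ∈ b ∩ c) ↔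
      (∀ b ∈ β, ∀ b' ∈ β, b.ncard = b'.ncard)) ∧
    ((∃ γ : Set (Set X), IsPartition γ ∧
        ∀ b ∈ β, ∀ c ∈ γ, ∃! x, x ∈ b ∩ c) ↔
      (∀ b ∈ β, Nat.card X = b.ncard * β.ncard)) := by
  have hβpos : 0 < β.ncard := by
    obtain ⟨x⟩ := ‹Nonempty X›
    obtain ⟨b, ⟨hb, -⟩, -⟩ := hβ.existsUnique_block x
    exact Set.ncard_pos (Set.toFinite β) |>.mpr ⟨b, hb⟩
  have hAB : (∃ γ : Set (Set X), IsPartition γ ∧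
      ∀ b ∈ β, ∀ c ∈ γ, ∃! x, x ∈ b ∩ c) →
      ∀ b ∈ β, ∀ b' ∈ β, b.ncard = b'.ncard := by
    rintro ⟨γ, hγ, hcomp⟩ b hb b' hb'
    obtain ⟨ha, -⟩ := complementary_cards hβ hγ hcomp
    rw [ha b hb, ha b' hb']
  have hAC : (∃ γ : Set (Set X), IsPartition γ ∧
      ∀ b ∈ β, ∀ c ∈ γ, ∃! x, x ∈ b ∩ c) →
      ∀ b ∈ β, Nat.card X = b.ncard * β.ncard := by
    rintro ⟨γ, hγ, hcomp⟩ b hb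
    obtain ⟨ha, hc⟩ := complementary_cards hβ hγ hcomp
    rw [hc, ha b hb, Nat.mul_comm]
  have hCB : (∀ b ∈ β, Nat.card X = b.ncard * β.ncard) →
      ∀ b ∈ β, ∀ b' ∈ β, b.ncard = b'.ncard := by
    intro hC b hb b' hb'
    have h1 := hC b hb
    have h2 := hC b' hb'
    rw [h1] at h2
    exact Nat.eq_of_mul_eq_mul_right hβpos h2
  exact ⟨⟨hAB, exists_complementary hβ⟩,
    ⟨hAC, fun hC => exists_complementary hβ (hCB hC)⟩⟩
end
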